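/- arXiv:1811.03137 — 3 statements merged into one kernel-verified Lean document; each statement's English description precedes it below -/
import Mathlib

section
/- Let m > 0, N ≥ 1, s ∈ ℕ, and let p, n ∈ ℕ with p ≠ n. Then ⟨H̃^N_{z̄^s} e_p, H̃^N_{z̄^s} e_n⟩ = 0 in L²(μ_m), where e_n(z) = (m^{(n+1)/2}/√(n!)) z^n. -/
/-!
Rotations `z ↦ a z` with `|a| = 1` preserve `μ_m` and map each `z̄^j z^k` to a multiple of
itself, so they induce unitaries of `L²(μ_m)` leaving `F^{N,m}` invariant and hence commuting
with `P_{F^{N,m}}`. Since `z̄^s e_k` is an eigenvector with eigenvalue `ā^s a^k`, so is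
`H̃^N_{z̄^s} e_k`. Choosing `a` with `a^p ≠ a^n` makes the eigenvalues for `p` and `n` distinct,
and eigenvectors of an isometry for distinct unimodular eigenvalues are orthogonal.
-/

open MeasureTheory Complex Polynomial Filter

noncomputable section

/-- The Gaussian measure `dμ_m(z) = (1/π) e^{-m|z|²} dA(z)` on `ℂ`. -/
def gaussMeasure (m : ℝ) : Measure ℂ :=
  volume.withDensity fun z => ENNReal.ofReal ((1 / Real.pi) * Real.exp (-m * ‖z‖ ^ 2))

/-- The space `L²(μ_m)`. -/
abbrev Lp2 (m : ℝ) := Lp ℂ 2 (gaussMeasure m)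

/-- The polyanalytic Fock space `F^{N,m}`, the `L²(μ_m)`-closure of
`span{ z̄^j z^k : 0 ≤ j ≤ N-1, k ∈ ℕ }`. -/
def polyFock (m : ℝ) (N : ℕ) : Submodule ℂ (Lp2 m) :=
  (Submodule.span ℂ {f : Lp2 m | ∃ j k : ℕ, j < N ∧
      (f : ℂ → ℂ) =ᵐ[gaussMeasure m] fun z => (starRingEnd ℂ) z ^ j * z ^ k}).topologicalClosure

instance (m : ℝ) (N : ℕ) : CompleteSpace (polyFock m N) :=
  (Submodule.isClosed_topologicalClosure _).completeSpace_coe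

/-- The operator `H̃^N_{ḡ}` applied to an analytic polynomial `p`:
`(I - P_{F^{N,m}})(ḡ p)`. -/
def tildeH (m : ℝ) (N : ℕ) (g : ℂ → ℂ) (p : Polynomial ℂ)
    (h : MemLp (fun z : ℂ => (starRingEnd ℂ) (g z) * p.eval z) 2 (gaussMeasure m)) : Lp2 m :=
  h.toLp _ - ((polyFock m N).orthogonalProjectionOnto (h.toLp _) : Lp2 m)

/-- The polynomial giving the normalized monomial basis element
`e_n(z) = (m^{(n+1)/2}/√(n!)) z^n` of `𝓕_m`. -/
def fockBasisPoly (m : ℝ) (n : ℕ) : Polynomial ℂ :=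
  Polynomial.C ((m ^ (((n : ℝ) + 1) / 2) / Real.sqrt (Nat.factorial n) : ℝ) : ℂ) *
    Polynomial.X ^ n

theorem LinearIsometry.starProjection_apply_of_map_eq {𝕜 E : Type*} [RCLike 𝕜]
    [NormedAddCommGroup E] [InnerProductSpace 𝕜 E] (U : E →ₗᵢ[𝕜] E) (K : Submodule 𝕜 E)
    [K.HasOrthogonalProjection] (hK : K.map (U : E →ₗ[𝕜] E) = K) (x : E) :
    K.starProjection (U x) = U (K.starProjection x) := by
  have : (K.map (U : E →ₗ[𝕜] E)).HasOrthogonalProjection := by rw [hK]; infer_instance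
  rw [U.map_starProjection' K x]
  simp only [hK]

theorem LinearIsometry.inner_eq_zero_of_apply_eq_circle_smul {E : Type*}
    [NormedAddCommGroup E] [InnerProductSpace ℂ E] (U : E →ₗᵢ[ℂ] E) {x y : E} {u v : Circle}
    (hx : U x = (u : ℂ) • x) (hy : U y = (v : ℂ) • y) (huv : u ≠ v) : inner ℂ x y = 0 := by
  have hscalar : ((u⁻¹ * v : Circle) : ℂ) ≠ 1 := by
    rw [Ne, ← Circle.coe_one, Circle.coe_inj, inv_mul_eq_one]
    exact huv
  have hfixed : inner ℂ x y = ((u⁻¹ * v : Circle) : ℂ) * inner ℂ x y := calc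
    inner ℂ x y = inner ℂ (U x) (U y) := (U.inner_map_map x y).symm
    _ = _ := by
      rw [hx, hy, inner_smul_left, inner_smul_right, Circle.coe_mul, Circle.coe_inv_eq_conj,
        mul_assoc]
  have : (1 - ((u⁻¹ * v : Circle) : ℂ)) * inner ℂ x y = 0 := by linear_combination hfixed
  exact (mul_eq_zero.1 this).resolve_left (sub_ne_zero.2 hscalar.symm)

theorem Circle.exists_pow_ne_pow {p n : ℕ} (h : p ≠ n) : ∃ a : Circle, a ^ p ≠ a ^ n := by
  set d : ℤ := n - p
  have hd : (d : ℝ) ≠ 0 := by simpa [d, sub_eq_zero] using h.symm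
  -- `a = exp(iπ/d)` has `a ^ d = -1`.
  refine ⟨Circle.exp (Real.pi / d), fun hpn => Circle.exp_pi_ne_one ?_⟩
  rw [← mul_div_cancel₀ Real.pi hd, Circle.exp_intCast_mul, zpow_sub,
    zpow_natCast, zpow_natCast, hpn, mul_inv_cancel]

open scoped ENNReal

theorem MeasureTheory.MeasurePreserving.withDensity_of_comp_eq {X : Type*} [MeasurableSpace X]
    {μ : Measure X} {f : X → X} {g : X → ℝ≥0∞} (hf : MeasurePreserving f μ μ)
    (hfe : MeasurableEmbedding f) (hg : ∀ x, g (f x) = g x) :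
    MeasurePreserving f (μ.withDensity g) (μ.withDensity g) := by
  refine ⟨hf.measurable, Measure.ext fun s hs => ?_⟩
  rw [Measure.map_apply hf.measurable hs, withDensity_apply _ (hs.preimage hf.measurable),
    withDensity_apply _ hs, ← hf.setLIntegral_comp_preimage_emb hfe g s]
  simp only [hg]

theorem measurePreserving_circle_mul_gaussMeasure (m : ℝ) (a : Circle) :
    MeasurePreserving (fun z : ℂ => (a : ℂ) * z) (gaussMeasure m) (gaussMeasure m) := by
  have hrot : ⇑(rotation a) = fun z : ℂ => (a : ℂ) * z := funext (rotation_apply a)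
  refine MeasurePreserving.withDensity_of_comp_eq ?_ ?_ fun z => ?_
  · exact hrot ▸ (rotation a).measurePreserving
  · exact hrot ▸ (rotation a).toHomeomorph.toMeasurableEquiv.measurableEmbedding
  · simp [Circle.norm_coe]

def rotateLp (m : ℝ) (a : Circle) : Lp2 m →ₗᵢ[ℂ] Lp2 m :=
  Lp.compMeasurePreservingₗᵢ ℂ _ (measurePreserving_circle_mul_gaussMeasure m a)

theorem coeFn_rotateLp (m : ℝ) (a : Circle) (f : Lp2 m) :
    rotateLp m a f =ᵐ[gaussMeasure m] fun z => f ((a : ℂ) * z) :=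
  Lp.coeFn_compMeasurePreserving f _

theorem rotateLp_eq_smul_of_ae_eq {m : ℝ} {a : Circle} {f : Lp2 m} {g : ℂ → ℂ} {c : ℂ}
    (hf : f =ᵐ[gaussMeasure m] g) (hg : ∀ z, g ((a : ℂ) * z) = c * g z) :
    rotateLp m a f = c • f := by
  have hfa := (measurePreserving_circle_mul_gaussMeasure m a).quasiMeasurePreserving.ae_eq_comp hf
  refine Lp.ext ?_
  filter_upwards [coeFn_rotateLp m a f, hfa, hf, Lp.coeFn_smul c f] with z hrot hfaz hfz hsmul
  rw [hrot, hsmul, Pi.smul_apply, smul_eq_mul, hfz]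
  exact hfaz.trans (hg z)

theorem rotateLp_rotateLp_inv (m : ℝ) (a : Circle) (f : Lp2 m) :
    rotateLp m a (rotateLp m a⁻¹ f) = f := by
  have hinv := (measurePreserving_circle_mul_gaussMeasure m a).quasiMeasurePreserving.ae_eq_comp
    (coeFn_rotateLp m a⁻¹ f)
  refine Lp.ext ?_
  filter_upwards [coeFn_rotateLp m a (rotateLp m a⁻¹ f), hinv] with z hz hinvz
  rw [hz]
  refine hinvz.trans ?_
  simp [Circle.coe_ne_zero]

theorem polyFock_le_comap_rotateLp (m : ℝ) (N : ℕ) (a : Circle) :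
    polyFock m N ≤ (polyFock m N).comap (rotateLp m a : Lp2 m →ₗ[ℂ] Lp2 m) := by
  refine Submodule.topologicalClosure_minimal _ (Submodule.span_le.2 ?_)
    ((Submodule.isClosed_topologicalClosure _).preimage (rotateLp m a).continuous)
  rintro f ⟨j, k, hj, hf⟩
  have hrot : rotateLp m a f = ((a⁻¹ ^ j * a ^ k : Circle) : ℂ) • f :=
    rotateLp_eq_smul_of_ae_eq hf fun z => by
      simp only [Circle.coe_mul, Circle.coe_pow, Circle.coe_inv_eq_conj, map_mul]
      ring
  change rotateLp m a f ∈ polyFock m N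
  rw [hrot]
  exact Submodule.smul_mem _ _
    (Submodule.le_topologicalClosure _ (Submodule.subset_span ⟨j, k, hj, hf⟩))

theorem map_rotateLp_polyFock (m : ℝ) (N : ℕ) (a : Circle) :
    (polyFock m N).map (rotateLp m a : Lp2 m →ₗ[ℂ] Lp2 m) = polyFock m N := by
  refine le_antisymm (Submodule.map_le_iff_le_comap.2 (polyFock_le_comap_rotateLp m N a))
    fun x hx => ⟨rotateLp m a⁻¹ x, polyFock_le_comap_rotateLp m N a⁻¹ hx, ?_⟩
  exact rotateLp_rotateLp_inv m a x

theorem rotateLp_tildeH {m : ℝ} {N : ℕ} {g : ℂ → ℂ} {p : Polynomial ℂ} {a : Circle} {c : ℂ}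
    (h : MemLp (fun z : ℂ => (starRingEnd ℂ) (g z) * p.eval z) 2 (gaussMeasure m))
    (hc : ∀ z, (starRingEnd ℂ) (g ((a : ℂ) * z)) * p.eval ((a : ℂ) * z) =
      c * ((starRingEnd ℂ) (g z) * p.eval z)) :
    rotateLp m a (tildeH m N g p h) = c • tildeH m N g p h := by
  have hrot : rotateLp m a (h.toLp _) = c • h.toLp _ := rotateLp_eq_smul_of_ae_eq h.coeFn_toLp hc
  change rotateLp m a (h.toLp _ - (polyFock m N).starProjection (h.toLp _)) = _
  rw [map_sub, ← (rotateLp m a).starProjection_apply_of_map_eq _ (map_rotateLp_polyFock m N a),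
    hrot, map_smul, ← smul_sub]
  rfl

theorem conj_pow_mul_eval_fockBasisPoly_circle_mul (m : ℝ) (s k : ℕ) (a : Circle) (z : ℂ) :
    (starRingEnd ℂ) (((a : ℂ) * z) ^ s) * (fockBasisPoly m k).eval ((a : ℂ) * z) =
      ((a⁻¹ ^ s * a ^ k : Circle) : ℂ) *
        ((starRingEnd ℂ) (z ^ s) * (fockBasisPoly m k).eval z) := by
  simp only [fockBasisPoly, eval_mul, eval_pow, eval_C, eval_X, Circle.coe_mul, Circle.coe_pow,
    Circle.coe_inv_eq_conj, map_mul, map_pow]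
  ring

theorem tildeH_basis_orthogonal_general (m : ℝ) (N : ℕ) (s : ℕ)
    (p n : ℕ) (hpn : p ≠ n)
    (h1 : MemLp (fun z : ℂ => (starRingEnd ℂ) (z ^ s) * (fockBasisPoly m p).eval z) 2
      (gaussMeasure m))
    (h2 : MemLp (fun z : ℂ => (starRingEnd ℂ) (z ^ s) * (fockBasisPoly m n).eval z) 2
      (gaussMeasure m)) :
    (inner ℂ (tildeH m N (fun z => z ^ s) (fockBasisPoly m p) h1)
        (tildeH m N (fun z => z ^ s) (fockBasisPoly m n) h2) : ℂ) = 0 := by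
  obtain ⟨a, ha⟩ := Circle.exists_pow_ne_pow hpn
  exact (rotateLp m a).inner_eq_zero_of_apply_eq_circle_smul
    (rotateLp_tildeH h1 (conj_pow_mul_eval_fockBasisPoly_circle_mul m s p a))
    (rotateLp_tildeH h2 (conj_pow_mul_eval_fockBasisPoly_circle_mul m s n a))
    (mul_left_cancel.mt ha)

/-- For `p ≠ n`, `⟨H̃^N_{z̄^s} e_p, H̃^N_{z̄^s} e_n⟩ = 0` in `L²(μ_m)`. -/
theorem tildeH_basis_orthogonal (m : ℝ) (hm : 0 < m) (N : ℕ) (hN : 1 ≤ N) (s : ℕ)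
    (p n : ℕ) (hpn : p ≠ n)
    (h1 : MemLp (fun z : ℂ => (starRingEnd ℂ) (z ^ s) * (fockBasisPoly m p).eval z) 2
      (gaussMeasure m))
    (h2 : MemLp (fun z : ℂ => (starRingEnd ℂ) (z ^ s) * (fockBasisPoly m n).eval z) 2
      (gaussMeasure m)) :
    (inner ℂ (tildeH m N (fun z => z ^ s) (fockBasisPoly m p) h1)
        (tildeH m N (fun z => z ^ s) (fockBasisPoly m n) h2) : ℂ) = 0 :=
  tildeH_basis_orthogonal_general m N s p n hpn h1 h2
end
end

section
/- Let s, n, r ∈ ℕ with n ≥ s. Then ∫_0^∞ y^n L_r^{n−s}(y) e^{−y} dy = (−1)^r · (s! (r+n−s)!/r!) · binom(n, s−r), where binom(n, s−r) is interpreted as 0 when s − r > n or r > s. -/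
open MeasureTheory Complex Polynomial Filter

noncomputable section

/-- The generalized Laguerre polynomial
`L_k^α(x) = Σ_{i=0}^k (-1)^i binom(k+α, k-i) x^i / i!`. -/
def laguerre (k : ℕ) (α : ℕ) (x : ℝ) : ℝ :=
  ∑ i ∈ Finset.range (k + 1), (-1 : ℝ) ^ i * ((k + α).choose (k - i)) * x ^ i / (Nat.factorial i)

/-- `I_{a,b,c} = ∫_0^∞ y^a L_b^c(y) e^{-y} dy`. -/
def Iint (a b c : ℕ) : ℝ :=
  ∫ y in Set.Ioi (0 : ℝ), y ^ a * laguerre b c y * Real.exp (-y)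

/-!
Expanding `L_r^α` and integrating termwise against `∫_0^∞ y^(n+i) e^{-y} dy = (n+i)!` turns the
integral into `n! Σ_i (-1)^i binom(r+α, r-i) binom(n+i, i)`. Since `(-1)^i binom(n+i, i)` is the
generalized binomial coefficient `binom(-n-1, i)`, Chu–Vandermonde sums this to
`n! binom(r+α-n-1, r) = (-1)^r n! binom(n-α, r)`, which for `α = n - s` is `(-1)^r n! binom(s, r)`.
-/

open Finset Set

theorem Ring.choose_neg_natCast_add_one {R : Type*} [CommRing R] [BinomialRing R] (n i : ℕ) :
    Ring.choose (-((n : R) + 1)) i = (-1) ^ i * ((n + i).choose i : R) := by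
  have h : (n : R) + 1 + i - 1 = ((n + i : ℕ) : R) := by push_cast; ring
  rw [Ring.choose_neg, h, Ring.choose_natCast, Int.negOnePow_def]
  simp [Units.smul_def]

theorem sum_neg_one_pow_mul_choose_mul_add_choose {R : Type*} [CommRing R] [BinomialRing R]
    (N n r : ℕ) :
    ∑ i ∈ range (r + 1), (-1) ^ i * (N.choose (r - i) : R) * ((n + i).choose i) =
      Ring.choose ((N : R) - n - 1) r := by
  rw [sub_sub, sub_eq_add_neg, Ring.add_choose_eq r (Commute.all _ _),
    ← Nat.sum_antidiagonal_swap]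
  simp only [Prod.fst_swap, Prod.snd_swap]
  rw [Nat.sum_antidiagonal_eq_sum_range_succ
      (fun i j => Ring.choose (N : R) j * Ring.choose (-((n : R) + 1)) i)]
  refine sum_congr rfl fun i _ => ?_
  rw [Ring.choose_natCast, Ring.choose_neg_natCast_add_one]
  ring

theorem Ring.choose_natCast_add_sub_natCast_sub_one {R : Type*} [CommRing R] [BinomialRing R]
    (r α n : ℕ) :
    Ring.choose (((r + α : ℕ) : R) - n - 1) r = (-1) ^ r * Ring.choose ((n : R) - α) r := by
  have h : ((r + α : ℕ) : R) - n - 1 = -((n : R) - α - r + 1) := by push_cast; ring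
  rw [h, Ring.choose_neg, show (n : R) - α - r + 1 + r - 1 = n - α by ring, Int.negOnePow_def]
  simp [Units.smul_def]

theorem integrableOn_pow_mul_exp_neg_Ioi (a : ℕ) :
    IntegrableOn (fun y : ℝ => y ^ a * Real.exp (-y)) (Ioi 0) := by
  refine (Real.GammaIntegral_convergent (s := (a : ℝ) + 1) (by positivity)).congr_fun
    (fun y _ => ?_) measurableSet_Ioi
  dsimp only
  rw [add_sub_cancel_right, Real.rpow_natCast, mul_comm]

theorem integral_pow_mul_exp_neg_Ioi (a : ℕ) :
    ∫ y in Ioi (0 : ℝ), y ^ a * Real.exp (-y) = a.factorial := by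
  rw [← Real.Gamma_nat_eq_factorial, Real.Gamma_eq_integral (by positivity)]
  refine setIntegral_congr_fun measurableSet_Ioi (fun y _ => ?_)
  rw [add_sub_cancel_right, Real.rpow_natCast, mul_comm]

theorem integral_pow_mul_laguerre_mul_exp_neg_eq_sum (n r α : ℕ) :
    ∫ y in Ioi (0 : ℝ), y ^ n * laguerre r α y * Real.exp (-y) =
      ∑ i ∈ range (r + 1), (-1 : ℝ) ^ i * ((r + α).choose (r - i)) / i.factorial *
        (n + i).factorial := by
  have hexpand : ∀ y : ℝ, y ^ n * laguerre r α y * Real.exp (-y) =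
      ∑ i ∈ range (r + 1), (-1 : ℝ) ^ i * ((r + α).choose (r - i)) / i.factorial *
        (y ^ (n + i) * Real.exp (-y)) := by
    intro y
    rw [laguerre, mul_sum, sum_mul]
    refine sum_congr rfl fun i _ => ?_
    ring
  simp_rw [hexpand]
  rw [integral_finsetSum _ fun i _ => (integrableOn_pow_mul_exp_neg_Ioi (n + i)).const_mul _]
  simp_rw [integral_const_mul, integral_pow_mul_exp_neg_Ioi]

theorem integral_pow_mul_laguerre_mul_exp_neg (n r α : ℕ) :
    ∫ y in Ioi (0 : ℝ), y ^ n * laguerre r α y * Real.exp (-y) =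
      (-1) ^ r * n.factorial * Ring.choose ((n : ℝ) - α) r := by
  have hfac : ∀ i : ℕ, ((n + i).factorial : ℝ) / i.factorial = n.factorial * (n + i).choose i := by
    intro i
    rw [← Nat.add_choose_mul_factorial_mul_factorial n i]
    push_cast
    field_simp
  calc ∫ y in Ioi (0 : ℝ), y ^ n * laguerre r α y * Real.exp (-y)
      = n.factorial * ∑ i ∈ range (r + 1),
          (-1 : ℝ) ^ i * ((r + α).choose (r - i)) * ((n + i).choose i) := by
        rw [integral_pow_mul_laguerre_mul_exp_neg_eq_sum, mul_sum]
        refine sum_congr rfl fun i _ => ?_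
        rw [div_mul_comm, hfac]
        ring
    _ = n.factorial * Ring.choose (((r + α : ℕ) : ℝ) - n - 1) r := by
        rw [sum_neg_one_pow_mul_choose_mul_add_choose]
    _ = (-1) ^ r * n.factorial * Ring.choose ((n : ℝ) - α) r := by
        rw [Ring.choose_natCast_add_sub_natCast_sub_one]
        ring

theorem factorial_mul_choose_eq (s n r : ℕ) (hsn : s ≤ n) :
    (n.factorial : ℝ) * s.choose r =
      s.factorial * (r + n - s).factorial / r.factorial *
        (if r ≤ s then (n.choose (s - r) : ℝ) else 0) := by
  split_ifs with hrs
  · have hsub : n - (s - r) = r + n - s := by omega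
    rw [Nat.cast_choose ℝ hrs, Nat.cast_choose ℝ (Nat.sub_le_of_le_add (by omega)), hsub]
    field_simp
  · rw [Nat.choose_eq_zero_of_lt (not_le.mp hrs)]
    simp

/-- For `n ≥ s`,
`∫_0^∞ y^n L_r^{n-s}(y) e^{-y} dy = (-1)^r (s!(r+n-s)!/r!) binom(n, s-r)`,
where the binomial coefficient is interpreted as `0` when `s - r > n` or `r > s`. -/
theorem laguerre_integral_eq (s n r : ℕ) (hsn : s ≤ n) :
    ∫ y in Set.Ioi (0 : ℝ), y ^ n * laguerre r (n - s) y * Real.exp (-y) =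
      (-1 : ℝ) ^ r *
        ((Nat.factorial s : ℝ) * (Nat.factorial (r + n - s) : ℝ) / (Nat.factorial r : ℝ)) *
        (if r ≤ s then (n.choose (s - r) : ℝ) else 0) := by
  have hcast : (n : ℝ) - (n - s : ℕ) = s := by rw [Nat.cast_sub hsn]; ring
  rw [integral_pow_mul_laguerre_mul_exp_neg, hcast, Ring.choose_natCast, mul_assoc,
    factorial_mul_choose_eq s n r hsn, mul_assoc]
end
end

section
/- Let m > 0, N ≥ 1, and s, n ∈ ℕ with n ≥ s. Then (m^{n+1}/n!) · ⟨z̄^s z^n, P_{F^{N,m}}(z̄^s z^n)⟩_{L²(μ_m)} = (s!/m^s) · Σ_{r=0}^{N−1} binom(n, s−r) · binom(s, r), where binomial coefficients with negative or out-of-range arguments are interpreted as 0. -/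
open MeasureTheory Complex Polynomial Filter

noncomputable section

/-!
Monomials `z̄^j z^k` of different "angular frequency" `k - j` are orthogonal in `L²(μ_m)` (rotation
invariance), and `⟨z̄^a z^{a+d}, z̄^l z^{l+d}⟩ = (a+l+d)!/m^{a+l+d+1}` (a Gamma integral). Pairing
the complex Hermite polynomial `H_{u,u+d}` with `z̄^a z^{a+d}` produces the `u`-th forward
difference of `x ↦ C(x, a)` at `a + d`, which vanishes for `u > a` and equals `C(a+d, a-u)`
otherwise. Expanding `z̄^s z^{s+d} = ∑_{u ≤ s} c_u H_{u,u+d}` and keeping the terms `u < N` gives an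
element of `F^{N,m}`; Newton's forward-difference formula shows that it has the same inner product
with every generator `z̄^a z^b` (`a < N`) as `z̄^s z^{s+d}`, so it is the projection.
-/

open Finset fwdDiff

lemma fwdDiff_iter_choose_of_le {a u : ℕ} (h : u ≤ a) (y : ℕ) :
    Δ_[1] ^[u] (fun x ↦ (x.choose a : ℤ)) y = y.choose (a - u) := by
  obtain ⟨j, rfl⟩ := Nat.exists_eq_add_of_le h
  rw [fwdDiff_iter_choose, Nat.add_sub_cancel_left]

lemma fwdDiff_iter_choose_of_lt {a u : ℕ} (h : a < u) (y : ℕ) :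
    Δ_[1] ^[u] (fun x ↦ (x.choose a : ℤ)) y = 0 := by
  obtain ⟨j, rfl⟩ := Nat.exists_eq_add_of_lt h
  have choose_zero := fwdDiff_iter_choose 0 a
  rw [add_zero] at choose_zero
  rw [show a + j + 1 = j + 1 + a by ring, Function.iterate_add_apply, choose_zero]
  simp_rw [Nat.choose_zero_right, Function.iterate_succ_apply, Nat.cast_one, fwdDiff_const,
    fwdDiff_iter_eq_sum_shift, smul_zero, sum_const_zero]

lemma sum_range_choose_mul_fwdDiff_iter_choose {N a : ℕ} (ha : a < N) (s y : ℕ) :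
    ∑ u ∈ range N, (s.choose u : ℤ) * Δ_[1] ^[u] (fun x ↦ (x.choose a : ℤ)) y =
      (y + s).choose a := by
  have newton := shift_eq_sum_fwdDiff_iter 1 (fun x ↦ (x.choose a : ℤ)) s y
  simp only [smul_eq_mul, mul_one, nsmul_eq_mul] at newton
  rw [newton]
  have hmax := sum_subset (range_subset_range.2 (le_max_left N (s + 1)))
    (f := fun u ↦ (s.choose u : ℤ) * Δ_[1] ^[u] (fun x ↦ (x.choose a : ℤ)) y) fun u _ hu ↦ by
      rw [fwdDiff_iter_choose_of_lt (by rw [mem_range] at hu; omega), mul_zero]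
  rw [hmax, ← sum_subset (range_subset_range.2 (le_max_right N (s + 1))) fun u _ hu ↦ by
      rw [Nat.choose_eq_zero_of_lt (by simpa using hu), Nat.cast_zero, zero_mul]]

lemma integral_gaussMeasure {E : Type*} [NormedAddCommGroup E] [NormedSpace ℝ E] (m : ℝ)
    (g : ℂ → E) :
    ∫ z, g z ∂gaussMeasure m = ∫ z, ((1 / Real.pi) * Real.exp (-m * ‖z‖ ^ 2)) • g z := by
  rw [gaussMeasure, integral_withDensity_eq_integral_toReal_smul (by fun_prop)
    (ae_of_all _ fun _ => ENNReal.ofReal_lt_top)]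
  congr with z
  rw [ENNReal.toReal_ofReal (by positivity)]

lemma integral_gaussMeasure_comp_mul {E : Type*} [NormedAddCommGroup E] [NormedSpace ℝ E]
    (m : ℝ) {c : ℂ} (hc : ‖c‖ = 1) (g : ℂ → E) :
    ∫ z, g (c * z) ∂gaussMeasure m = ∫ z, g z ∂gaussMeasure m := by
  let a : Circle := ⟨c, by simpa [Submonoid.unitSphere, mem_sphere_iff_norm] using hc⟩
  have := (rotation a).measurePreserving.integral_comp (rotation a).toHomeomorph.measurableEmbedding
    fun z => ((1 / Real.pi) * Real.exp (-m * ‖z‖ ^ 2)) • g z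
  simp only [rotation_apply, norm_mul, Circle.norm_coe, one_mul] at this
  rw [integral_gaussMeasure, integral_gaussMeasure]
  exact this

lemma integral_conj_pow_mul_pow_of_ne (m : ℝ) {p q : ℕ} (hpq : p ≠ q) :
    ∫ z, (starRingEnd ℂ) z ^ p * z ^ q ∂gaussMeasure m = 0 := by
  have hqp : (q : ℂ) - p ≠ 0 := sub_ne_zero.2 (Nat.cast_injective.ne hpq.symm)
  set c := Complex.exp ((Real.pi / (q - p) : ℝ) * I)
  have hc : (starRingEnd ℂ) c ^ p * c ^ q = -1 := by
    rw [← Complex.exp_conj, map_mul, conj_ofReal, conj_I, ← Complex.exp_nat_mul,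
      ← Complex.exp_nat_mul, ← Complex.exp_add, ← Complex.exp_pi_mul_I]
    congr 1
    push_cast
    field_simp
    ring
  have hrot := integral_gaussMeasure_comp_mul m (c := c) (Complex.norm_exp_ofReal_mul_I _)
    fun z => (starRingEnd ℂ) z ^ p * z ^ q
  have (z : ℂ) : (starRingEnd ℂ) (c * z) ^ p * (c * z) ^ q = -((starRingEnd ℂ) z ^ p * z ^ q) := by
    rw [map_mul, mul_pow, mul_pow, ← neg_one_mul, ← hc]
    ring
  simp_rw [this, integral_neg] at hrot
  linear_combination -hrot / 2

section

variable {m : ℝ}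

lemma integral_gaussMeasure_norm_pow (hm : 0 < m) (k : ℕ) :
    ∫ z, ‖z‖ ^ (2 * k) ∂gaussMeasure m = k.factorial / m ^ (k + 1) := by
  have hq : (-2 : ℝ) < (2 * k : ℕ) := by push_cast; linarith [k.cast_nonneg (α := ℝ)]
  have := Complex.integral_rpow_mul_exp_neg_mul_rpow (by norm_num : (1 : ℝ) ≤ 2) hq hm
  rw [show ((2 * k : ℕ) + 2 : ℝ) / 2 = (k + 1 : ℕ) by push_cast; ring, neg_div,
    show ((2 * k : ℕ) + 2 : ℝ) / 2 = (k + 1 : ℕ) by push_cast; ring, Real.rpow_neg hm.le,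
    Real.rpow_natCast, Nat.cast_succ, Real.Gamma_nat_eq_factorial] at this
  simp only [Real.rpow_natCast, Real.rpow_two] at this
  rw [integral_gaussMeasure]
  simp_rw [smul_eq_mul, mul_assoc, integral_const_mul, mul_comm (Real.exp _), this]
  field_simp

lemma integrable_gaussMeasure_norm_pow (hm : 0 < m) (k : ℕ) :
    Integrable (fun z : ℂ => ‖z‖ ^ (2 * k)) (gaussMeasure m) :=
  Integrable.of_integral_ne_zero (by rw [integral_gaussMeasure_norm_pow hm]; positivity)

lemma memLp_conj_pow_mul_pow (hm : 0 < m) (j k : ℕ) :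
    MemLp (fun z : ℂ => (starRingEnd ℂ) z ^ j * z ^ k) 2 (gaussMeasure m) := by
  rw [memLp_two_iff_integrable_sq_norm (by fun_prop)]
  convert integrable_gaussMeasure_norm_pow hm (j + k) using 2 with z
  simp only [norm_mul, norm_pow, Complex.norm_conj]
  ring

lemma integral_conj_pow_mul_pow_self (hm : 0 < m) (p : ℕ) :
    ∫ z, (starRingEnd ℂ) z ^ p * z ^ p ∂gaussMeasure m = p.factorial / (m : ℂ) ^ (p + 1) := by
  have (z : ℂ) : (starRingEnd ℂ) z ^ p * z ^ p = ((‖z‖ ^ (2 * p) : ℝ) : ℂ) := by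
    rw [← mul_pow, conj_mul', pow_mul]
    norm_cast
  simp_rw [this]
  rw [integral_complex_ofReal, integral_gaussMeasure_norm_pow hm]
  norm_cast

variable (hm : 0 < m)

def monomialLp (j k : ℕ) : Lp2 m := (memLp_conj_pow_mul_pow hm j k).toLp _

lemma inner_monomialLp (a b j k : ℕ) :
    inner ℂ (monomialLp hm a b) (monomialLp hm j k) =
      if b + j = a + k then ((b + j).factorial : ℂ) / (m : ℂ) ^ (b + j + 1) else 0 := by
  rw [monomialLp, monomialLp, L2.inner_def]
  have hint : ∫ z, inner ℂ ((memLp_conj_pow_mul_pow hm a b).toLp _ z)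
        ((memLp_conj_pow_mul_pow hm j k).toLp _ z) ∂gaussMeasure m =
      ∫ z, (starRingEnd ℂ) z ^ (b + j) * z ^ (a + k) ∂gaussMeasure m := by
    refine integral_congr_ae ?_
    filter_upwards [(memLp_conj_pow_mul_pow hm a b).coeFn_toLp,
      (memLp_conj_pow_mul_pow hm j k).coeFn_toLp] with z hab hjk
    rw [hab, hjk, RCLike.inner_apply, map_mul, map_pow, map_pow, Complex.conj_conj]
    ring
  rw [hint]
  split_ifs with h
  · rw [← h, integral_conj_pow_mul_pow_self hm]
  · exact integral_conj_pow_mul_pow_of_ne m h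

lemma monomialLp_mem_polyFock {N j : ℕ} (hj : j < N) (k : ℕ) :
    monomialLp hm j k ∈ polyFock m N :=
  Submodule.le_topologicalClosure _
    (Submodule.subset_span ⟨j, k, hj, (memLp_conj_pow_mul_pow hm j k).coeFn_toLp⟩)

lemma mem_orthogonal_polyFock {N : ℕ} {x : Lp2 m}
    (hx : ∀ j < N, ∀ k, inner ℂ (monomialLp hm j k) x = 0) : x ∈ (polyFock m N)ᗮ := by
  rw [polyFock, Submodule.orthogonal_closure, Submodule.mem_orthogonal]
  intro u hu
  rw [← Submodule.mem_orthogonal_singleton_iff_inner_left]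
  refine Submodule.span_le.2 ?_ hu
  rintro f ⟨j, k, hj, hf⟩
  obtain rfl : f = monomialLp hm j k :=
    Lp.ext (hf.trans (memLp_conj_pow_mul_pow hm j k).coeFn_toLp.symm)
  exact Submodule.mem_orthogonal_singleton_iff_inner_left.2 (hx j hj k)

/-- The complex Hermite polynomial
`H_{u,u+d} = ∑ᵢ (-1)ⁱ i! C(u,i) C(u+d,i) m⁻ⁱ z̄^{u-i} z^{u+d-i}`, reindexed by `l = u - i`. -/
def hermiteLp (d u : ℕ) : Lp2 m :=
  ∑ l ∈ range (u + 1), ((-1) ^ (u - l) * u.choose l *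
    ((u + d).factorial / (l + d).factorial : ℂ) * ((m : ℂ) ^ l / (m : ℂ) ^ u)) •
      monomialLp hm l (l + d)

lemma hermiteLp_mem_polyFock {N : ℕ} (d : ℕ) {u : ℕ} (hu : u < N) :
    hermiteLp hm d u ∈ polyFock m N :=
  Submodule.sum_mem _ fun l hl ↦ Submodule.smul_mem _ _
    (monomialLp_mem_polyFock hm (by rw [mem_range] at hl; omega) _)

lemma inner_monomialLp_hermiteLp (a d u : ℕ) :
    inner ℂ (monomialLp hm a (a + d)) (hermiteLp hm d u) =
      (u + d).factorial * a.factorial / ((m : ℂ) ^ u * (m : ℂ) ^ (a + d + 1)) *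
        ((Δ_[1] ^[u] (fun x ↦ (x.choose a : ℤ)) (a + d) : ℤ) : ℂ) := by
  have hm0 : (m : ℂ) ≠ 0 := ofReal_ne_zero.2 hm.ne'
  rw [hermiteLp, inner_sum, fwdDiff_iter_eq_sum_shift]
  push_cast
  rw [mul_sum]
  refine sum_congr rfl fun l _ ↦ ?_
  have hfac : ((l + d).factorial : ℂ) ≠ 0 := Nat.cast_ne_zero.2 (Nat.factorial_ne_zero _)
  rw [inner_smul_right, inner_monomialLp, if_pos (by ring)]
  simp only [smul_eq_mul, mul_one]
  rw [show a + d + l = l + d + a by ring, ← Nat.add_choose_mul_factorial_mul_factorial (l + d) a]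
  push_cast
  field_simp
  ring

lemma inner_monomialLp_hermiteLp_of_ne {a b d : ℕ} (h : b ≠ a + d) (u : ℕ) :
    inner ℂ (monomialLp hm a b) (hermiteLp hm d u) = 0 := by
  rw [hermiteLp, inner_sum]
  refine sum_eq_zero fun l _ ↦ ?_
  rw [inner_smul_right, inner_monomialLp, if_neg (by omega), mul_zero]

/-- The first `N` terms of the expansion of `z̄^s z^{s+d}` in the Hermite polynomials
`H_{u,u+d}`, `u ≤ s`. -/
def truncHermiteExpansion (N s d : ℕ) : Lp2 m :=
  ∑ u ∈ range N, (s.choose u * ((s + d).factorial / (u + d).factorial : ℂ) *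
    ((m : ℂ) ^ u / (m : ℂ) ^ s)) • hermiteLp hm d u

lemma truncHermiteExpansion_mem_polyFock (N s d : ℕ) :
    truncHermiteExpansion hm N s d ∈ polyFock m N :=
  Submodule.sum_mem _ fun _ hu ↦ Submodule.smul_mem _ _
    (hermiteLp_mem_polyFock hm d (mem_range.1 hu))

lemma inner_monomialLp_truncHermiteExpansion (a N s d : ℕ) :
    inner ℂ (monomialLp hm a (a + d)) (truncHermiteExpansion hm N s d) =
      (s + d).factorial * a.factorial / ((m : ℂ) ^ s * (m : ℂ) ^ (a + d + 1)) *
        ((∑ u ∈ range N, (s.choose u : ℤ) * Δ_[1] ^[u] (fun x ↦ (x.choose a : ℤ)) (a + d) : ℤ) :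
          ℂ) := by
  have hm0 : (m : ℂ) ≠ 0 := ofReal_ne_zero.2 hm.ne'
  rw [truncHermiteExpansion, inner_sum, Int.cast_sum, mul_sum]
  refine sum_congr rfl fun u _ ↦ ?_
  have hfac : ((u + d).factorial : ℂ) ≠ 0 := Nat.cast_ne_zero.2 (Nat.factorial_ne_zero _)
  rw [inner_smul_right, inner_monomialLp_hermiteLp, Int.cast_mul, Int.cast_natCast]
  field_simp

lemma inner_monomialLp_truncHermiteExpansion_of_ne {a b d : ℕ} (h : b ≠ a + d) (N s : ℕ) :
    inner ℂ (monomialLp hm a b) (truncHermiteExpansion hm N s d) = 0 := by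
  rw [truncHermiteExpansion, inner_sum]
  refine sum_eq_zero fun u _ ↦ ?_
  rw [inner_smul_right, inner_monomialLp_hermiteLp_of_ne hm h, mul_zero]

lemma starProjection_monomialLp (N s d : ℕ) :
    (polyFock m N).starProjection (monomialLp hm s (s + d)) = truncHermiteExpansion hm N s d := by
  refine Submodule.eq_starProjection_of_mem_orthogonal
    (truncHermiteExpansion_mem_polyFock hm N s d) (mem_orthogonal_polyFock hm fun a ha b ↦ ?_)
  rw [inner_sub_right]
  by_cases hb : b = a + d
  · have hm0 : (m : ℂ) ≠ 0 := ofReal_ne_zero.2 hm.ne'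
    subst hb
    rw [inner_monomialLp, if_pos (by ring), inner_monomialLp_truncHermiteExpansion,
      sum_range_choose_mul_fwdDiff_iter_choose ha, show a + d + s = s + d + a by ring,
      ← Nat.add_choose_mul_factorial_mul_factorial (s + d) a]
    push_cast
    field_simp
    ring
  · rw [inner_monomialLp, if_neg (by omega), inner_monomialLp_truncHermiteExpansion_of_ne hm hb,
      sub_zero]

lemma inner_monomialLp_truncHermiteExpansion_self (N s d : ℕ) :
    inner ℂ (monomialLp hm s (s + d)) (truncHermiteExpansion hm N s d) =
      (s + d).factorial * s.factorial / ((m : ℂ) ^ s * (m : ℂ) ^ (s + d + 1)) *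
        ∑ r ∈ range N, ((s + d).choose (s - r) : ℂ) * (s.choose r : ℂ) := by
  rw [inner_monomialLp_truncHermiteExpansion, Int.cast_sum]
  congr 1
  refine sum_congr rfl fun r _ ↦ ?_
  rcases le_or_gt r s with hr | hr
  · rw [fwdDiff_iter_choose_of_le hr, Int.cast_mul]
    push_cast
    ring
  · rw [Nat.choose_eq_zero_of_lt hr]
    simp

end

theorem inner_proj_monomial_general (m : ℝ) (hm : 0 < m) (N : ℕ) (s n : ℕ) (hsn : s ≤ n)
    (h : MemLp (fun z : ℂ => (starRingEnd ℂ) z ^ s * z ^ n) 2 (gaussMeasure m)) :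
    ((m ^ (n + 1) / (Nat.factorial n : ℝ) : ℝ) : ℂ) *
        (inner ℂ (h.toLp _) (((polyFock m N).orthogonalProjectionOnto (h.toLp _) : polyFock m N) :
          Lp2 m) : ℂ) =
      (((Nat.factorial s : ℝ) / m ^ s : ℝ) : ℂ) *
        ∑ r ∈ Finset.range N, ((n.choose (s - r) : ℂ) * (s.choose r : ℂ)) := by
  obtain ⟨d, rfl⟩ := Nat.exists_eq_add_of_le hsn
  have hm0 : (m : ℂ) ≠ 0 := ofReal_ne_zero.2 hm.ne'
  have hfac : ((s + d).factorial : ℂ) ≠ 0 := Nat.cast_ne_zero.2 (Nat.factorial_ne_zero _)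
  rw [show h.toLp _ = monomialLp hm s (s + d) from rfl,
    Submodule.coe_orthogonalProjectionOnto_apply, starProjection_monomialLp,
    inner_monomialLp_truncHermiteExpansion_self]
  push_cast
  field_simp

/-- For `n ≥ s`,
`(m^{n+1}/n!)⟨z̄^s z^n, P_{F^{N,m}}(z̄^s z^n)⟩ = (s!/m^s) Σ_{r=0}^{N-1} binom(n,s-r) binom(s,r)`,
out-of-range binomial coefficients being `0`. -/
theorem inner_proj_monomial (m : ℝ) (hm : 0 < m) (N : ℕ) (hN : 1 ≤ N) (s n : ℕ) (hsn : s ≤ n)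
    (h : MemLp (fun z : ℂ => (starRingEnd ℂ) z ^ s * z ^ n) 2 (gaussMeasure m)) :
    ((m ^ (n + 1) / (Nat.factorial n : ℝ) : ℝ) : ℂ) *
        (inner ℂ (h.toLp _) (((polyFock m N).orthogonalProjectionOnto (h.toLp _) : polyFock m N) :
          Lp2 m) : ℂ) =
      (((Nat.factorial s : ℝ) / m ^ s : ℝ) : ℂ) *
        ∑ r ∈ Finset.range N, ((n.choose (s - r) : ℂ) * (s.choose r : ℂ)) :=
  inner_proj_monomial_general m hm N s n hsn h
end
end
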